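/- Let V be a finite set, let μ be a fully supported probability measure on Ω = {−1,+1}^V, and let c : V × Ω → (0,∞) be flipping rates satisfying the reversibility condition c(x,σ) μ(σ) = c(x,σˣ) μ(σˣ) for all x, σ. Suppose μ satisfies the log-Sobolev inequality with constant γ > 0, i.e. Ent_μ(F) ≤ (2/γ) D(√F) for every F ≥ 0. Then for every nonnegative F : Ω → ℝ₊ and every t ≥ 0, the entropy decays exponentially along the Glauber semigroup: Ent_μ(P_t F) ≤ e^{−γ t} Ent_μ(F). -/

import Mathlib

open Finset

/-- Flip the spin of `σ` at site `x`. -/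
def flipC {V : Type*} [DecidableEq V] (σ : V → Bool) (x : V) : V → Bool :=
  Function.update σ x (!σ x)

/-- The ±1 spin value of `σ` at site `x`. -/
def spinC {V : Type*} (σ : V → Bool) (x : V) : ℝ := if σ x then 1 else -1

/-- Expectation of `F` under the (discrete, not necessarily normalized) measure `μ`. -/
def Emean {V : Type*} [Fintype V] [DecidableEq V] (μ F : (V → Bool) → ℝ) : ℝ :=
  ∑ σ, μ σ * F σ

/-- The Glauber generator with flipping rates `c`. -/
def gen {V : Type*} [Fintype V] [DecidableEq V] (c : V → (V → Bool) → ℝ)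
    (F : (V → Bool) → ℝ) : (V → Bool) → ℝ :=
  fun σ => ∑ x, c x σ * (F (flipC σ x) - F σ)

/-- The Dirichlet form `D(F) = -E_μ[F ⬝ 𝓛F]`. -/
def dirichlet {V : Type*} [Fintype V] [DecidableEq V] (μ : (V → Bool) → ℝ)
    (c : V → (V → Bool) → ℝ) (F : (V → Bool) → ℝ) : ℝ :=
  - Emean μ (fun σ => F σ * gen c F σ)

/-- Entropy `Ent_μ(F) = E_μ[F log F] − E_μ[F] log E_μ[F]` (note `0 log 0 = 0` in Lean). -/
noncomputable def entropy {V : Type*} [Fintype V] [DecidableEq V] (μ F : (V → Bool) → ℝ) : ℝ :=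
  Emean μ (fun σ => F σ * Real.log (F σ)) - Emean μ F * Real.log (Emean μ F)

/-- Covariance under `μ`. -/
def covar {V : Type*} [Fintype V] [DecidableEq V] (μ F G : (V → Bool) → ℝ) : ℝ :=
  Emean μ (fun σ => F σ * G σ) - Emean μ F * Emean μ G

/-- Variance under `μ`. -/
def varM {V : Type*} [Fintype V] [DecidableEq V] (μ F : (V → Bool) → ℝ) : ℝ :=
  covar μ F F

/-- The Glauber generator as a linear map. -/
def genL {V : Type*} [Fintype V] [DecidableEq V] (c : V → (V → Bool) → ℝ) :
    ((V → Bool) → ℝ) →ₗ[ℝ] ((V → Bool) → ℝ) where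
  toFun := gen c
  map_add' F G := by
    funext σ
    simp only [gen, Pi.add_apply, ← Finset.sum_add_distrib]
    exact Finset.sum_congr rfl fun x _ => by ring
  map_smul' a F := by
    funext σ
    simp only [gen, Pi.smul_apply, smul_eq_mul, RingHom.id_apply, Finset.mul_sum]
    exact Finset.sum_congr rfl fun x _ => by ring

/-- The Glauber generator as a continuous linear map. -/
noncomputable def genCLM {V : Type*} [Fintype V] [DecidableEq V] (c : V → (V → Bool) → ℝ) :
    ((V → Bool) → ℝ) →L[ℝ] ((V → Bool) → ℝ) :=
  LinearMap.toContinuousLinearMap (genL c)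

/-- The Glauber semigroup `P_t = exp (t 𝓛)`. -/
noncomputable def heatSG {V : Type*} [Fintype V] [DecidableEq V] (c : V → (V → Bool) → ℝ)
    (t : ℝ) : ((V → Bool) → ℝ) →L[ℝ] ((V → Bool) → ℝ) :=
  NormedSpace.exp (t • genCLM c)

/-!
Along `P_t = exp (t 𝓛)` the mean `E_μ[P_t F]` is conserved, so for `f = P_t F > 0`
`d/dt Ent_μ(f) = E_μ[log f ⬝ 𝓛f] = -𝓔(log f, f)`, where reversibility turns `E_μ[G ⬝ 𝓛H]` into the
symmetric form `-𝓔(G, H)` (`dirichletBilin`). The elementary inequality `2 (√b - √a)² ≤ (log b - log a)(b - a)` gives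
`𝓔(log f, f) ≥ 2 𝓔(√f, √f) = 2 D(√f) ≥ γ Ent_μ(f)`, and Grönwall yields the decay.
Positivity of `P_t F` (needed to take logarithms) holds because `t𝓛 + K` is a positive operator for
`K` large, so `exp (t𝓛) = e^{-K} exp (t𝓛 + K)` preserves positivity; a general `F ≥ 0` is reached
from `F + ε` as `ε → 0`.
-/

section
open NormedSpace

variable {E : Type*} [NormedAddCommGroup E] [NormedSpace ℝ E] [CompleteSpace E]

lemma hasSum_exp_apply (A : E →L[ℝ] E) (v : E) :
    HasSum (fun n : ℕ => (n.factorial⁻¹ : ℝ) • (A ^ n) v) (exp A v) := by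
  simpa using (exp_series_hasSum_exp' (𝕂 := ℝ) A).mapL (ContinuousLinearMap.apply ℝ E v)

lemma exp_apply_of_apply_eq_zero (A : E →L[ℝ] E) {v : E} (hv : A v = 0) : exp A v = v := by
  refine ((hasSum_exp_apply A v).unique (hasSum_single 0 fun n hn => ?_)).trans (by simp)
  obtain ⟨m, rfl⟩ := Nat.exists_eq_succ_of_ne_zero hn
  simp [pow_succ, hv]

variable [PartialOrder E] [IsOrderedAddMonoid E] [OrderClosedTopology E] [PosSMulMono ℝ E]

lemma exp_apply_nonneg (A : E →L[ℝ] E) (hA : ∀ v, 0 ≤ v → 0 ≤ A v) {v : E} (hv : 0 ≤ v) :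
    0 ≤ exp A v := by
  have hpow : ∀ n : ℕ, 0 ≤ (A ^ n) v := by
    intro n
    induction n with
    | zero => simpa using hv
    | succ n ih => rw [pow_succ', mul_apply_eq_comp]; exact hA _ ih
  exact (hasSum_exp_apply A v).nonneg fun n => smul_nonneg (by positivity) (hpow n)

lemma exp_apply_nonneg_of_add_smul_one (A : E →L[ℝ] E) (K : ℝ)
    (hA : ∀ v, 0 ≤ v → 0 ≤ (A + K • 1) v) {v : E} (hv : 0 ≤ v) : 0 ≤ exp A v := by
  have hball : ∀ B : E →L[ℝ] E, B ∈ Metric.eball 0 (expSeries ℝ (E →L[ℝ] E)).radius :=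
    fun B => (expSeries_radius_eq_top ℝ (E →L[ℝ] E)).symm ▸ edist_lt_top _ _
  have hexp : exp A = Real.exp (-K) • exp (A + K • 1) := calc
    exp A = exp ((A + K • 1) + algebraMap ℝ (E →L[ℝ] E) (-K)) := by
      rw [Algebra.algebraMap_eq_smul_one]; congr 1; module
    _ = exp (A + K • 1) * algebraMap ℝ (E →L[ℝ] E) (Real.exp (-K)) := by
      rw [exp_add_of_commute_of_mem_ball (𝕂 := ℝ) (Algebra.commute_algebraMap_right _ _)
        (hball _) (hball _), Real.exp_eq_exp_ℝ, algebraMap_exp_comm]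
    _ = Real.exp (-K) • exp (A + K • 1) := by
      rw [Algebra.algebraMap_eq_smul_one, mul_smul_one]
  rw [hexp, smul_apply]
  exact smul_nonneg (Real.exp_pos _).le (exp_apply_nonneg _ hA hv)
end

open Real

lemma two_mul_sq_sqrt_sub_sqrt_le {a b : ℝ} (ha : 0 < a) (hb : 0 < b) :
    2 * (√b - √a) ^ 2 ≤ (log b - log a) * (b - a) := by
  set u := √a
  set v := √b
  have hu : 0 < u := sqrt_pos.2 ha
  have hv : 0 < v := sqrt_pos.2 hb
  have hlog : log b - log a = 2 * (log v - log u) := by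
    rw [← sq_sqrt ha.le, ← sq_sqrt hb.le, log_pow, log_pow]; push_cast; ring
  have hlower : v - u ≤ v * (log v - log u) := by
    have := log_le_sub_one_of_pos (div_pos hu hv)
    rw [log_div hu.ne' hv.ne', div_sub_one hv.ne', le_div_iff₀ hv] at this
    linarith
  have hupper : u * (log v - log u) ≤ v - u := by
    have := log_le_sub_one_of_pos (div_pos hv hu)
    rw [log_div hv.ne' hu.ne', div_sub_one hu.ne', le_div_iff₀ hu] at this
    linarith
  rw [hlog, ← sq_sqrt ha.le, ← sq_sqrt hb.le]
  nlinarith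

section
variable {V : Type*} [DecidableEq V]

@[simp] lemma flipC_flipC (σ : V → Bool) (x : V) : flipC (flipC σ x) x = σ := by
  funext y
  by_cases h : y = x
  · subst h; simp [flipC]
  · simp [flipC, h]

variable [Fintype V] {μ : (V → Bool) → ℝ} {c : V → (V → Bool) → ℝ}

lemma sum_rate_mul_flipC (hrev : ∀ x σ, c x σ * μ σ = c x (flipC σ x) * μ (flipC σ x))
    (x : V) (Φ : (V → Bool) → ℝ) :
    ∑ σ, μ σ * c x σ * Φ (flipC σ x) = ∑ σ, μ σ * c x σ * Φ σ :=
  Fintype.sum_bijective (flipC · x) (Function.Involutive.bijective fun σ => flipC_flipC σ x) _ _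
    fun σ => by rw [mul_comm (μ σ), hrev, mul_comm (c x _)]

variable (μ c) in
noncomputable def dirichletBilin (G H : (V → Bool) → ℝ) : ℝ :=
  (1 / 2) * ∑ x, ∑ σ, μ σ * c x σ * ((G (flipC σ x) - G σ) * (H (flipC σ x) - H σ))

lemma Emean_mul_gen (hrev : ∀ x σ, c x σ * μ σ = c x (flipC σ x) * μ (flipC σ x))
    (G H : (V → Bool) → ℝ) :
    Emean μ (fun σ => G σ * gen c H σ) = -dirichletBilin μ c G H := by
  have hx : ∀ x, ∑ σ, μ σ * c x σ * (G σ * (H (flipC σ x) - H σ)) =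
      -(1 / 2) * ∑ σ, μ σ * c x σ * ((G (flipC σ x) - G σ) * (H (flipC σ x) - H σ)) := by
    intro x
    have hflip := sum_rate_mul_flipC hrev x fun σ => G σ * (H (flipC σ x) - H σ)
    simp only [flipC_flipC] at hflip
    have hsplit : ∑ σ, μ σ * c x σ * ((G (flipC σ x) - G σ) * (H (flipC σ x) - H σ)) =
        -∑ σ, μ σ * c x σ * (G (flipC σ x) * (H σ - H (flipC σ x))) -
          ∑ σ, μ σ * c x σ * (G σ * (H (flipC σ x) - H σ)) := by
      rw [← sum_neg_distrib, ← sum_sub_distrib]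
      exact sum_congr rfl fun σ _ => by ring
    rw [hsplit, hflip]
    ring
  calc Emean μ (fun σ => G σ * gen c H σ)
      = ∑ x, ∑ σ, μ σ * c x σ * (G σ * (H (flipC σ x) - H σ)) := by
        simp only [Emean, gen, mul_sum]
        rw [sum_comm]
        exact sum_congr rfl fun x _ => sum_congr rfl fun σ _ => by ring
    _ = -dirichletBilin μ c G H := by
        rw [dirichletBilin, sum_congr rfl fun x _ => hx x, ← mul_sum]
        ring

lemma Emean_gen (hrev : ∀ x σ, c x σ * μ σ = c x (flipC σ x) * μ (flipC σ x))
    (H : (V → Bool) → ℝ) : Emean μ (gen c H) = 0 := by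
  simpa [dirichletBilin] using Emean_mul_gen hrev (fun _ => 1) H

lemma dirichlet_eq_dirichletBilin (hrev : ∀ x σ, c x σ * μ σ = c x (flipC σ x) * μ (flipC σ x))
    (H : (V → Bool) → ℝ) : dirichlet μ c H = dirichletBilin μ c H H := by
  rw [dirichlet, Emean_mul_gen hrev, neg_neg]


lemma Emean_log_mul_gen_le (hμ : ∀ σ, 0 ≤ μ σ) (hc : ∀ x σ, 0 ≤ c x σ)
    (hrev : ∀ x σ, c x σ * μ σ = c x (flipC σ x) * μ (flipC σ x))
    {f : (V → Bool) → ℝ} (hf : ∀ σ, 0 < f σ) :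
    Emean μ (fun σ => log (f σ) * gen c f σ) ≤ -2 * dirichlet μ c (fun σ => √(f σ)) := by
  rw [Emean_mul_gen hrev, dirichlet_eq_dirichletBilin hrev, dirichletBilin, dirichletBilin]
  have key : 2 * ∑ x, ∑ σ, μ σ * c x σ *
        ((√(f (flipC σ x)) - √(f σ)) * (√(f (flipC σ x)) - √(f σ))) ≤
      ∑ x, ∑ σ, μ σ * c x σ *
        ((log (f (flipC σ x)) - log (f σ)) * (f (flipC σ x) - f σ)) := by
    rw [mul_sum]
    refine sum_le_sum fun x _ => ?_
    rw [mul_sum]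
    refine sum_le_sum fun σ _ => ?_
    have := mul_le_mul_of_nonneg_left (two_mul_sq_sqrt_sub_sqrt_le (hf σ) (hf (flipC σ x)))
      (mul_nonneg (hμ σ) (hc x σ))
    linarith
  linarith

lemma gen_add_smul_nonneg (hc : ∀ x σ, 0 ≤ c x σ) {K : ℝ} (hK : ∀ σ, ∑ x, c x σ ≤ K)
    {G : (V → Bool) → ℝ} (hG : 0 ≤ G) : 0 ≤ gen c G + K • G := by
  intro σ
  have hσ : (gen c G + K • G) σ = ∑ x, c x σ * G (flipC σ x) + (K - ∑ x, c x σ) * G σ := by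
    simp only [gen, Pi.add_apply, Pi.smul_apply, smul_eq_mul, mul_sub, sum_sub_distrib]
    rw [← sum_mul]
    ring
  rw [hσ]
  exact add_nonneg (sum_nonneg fun x _ => mul_nonneg (hc x σ) (hG _))
    (mul_nonneg (sub_nonneg.2 (hK σ)) (hG σ))

lemma heatSG_nonneg (hc : ∀ x σ, 0 ≤ c x σ) {t : ℝ} (ht : 0 ≤ t) {G : (V → Bool) → ℝ}
    (hG : 0 ≤ G) : 0 ≤ heatSG c t G := by
  set K := ∑ σ, ∑ x, c x σ
  have hK : ∀ σ, ∑ x, c x σ ≤ K := fun σ =>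
    single_le_sum (f := fun σ => ∑ x, c x σ) (fun σ _ => sum_nonneg fun x _ => hc x σ)
      (mem_univ σ)
  refine exp_apply_nonneg_of_add_smul_one _ (t * K) (fun v hv => ?_) hG
  have hv' : (t • genCLM c + (t * K) • 1) v = t • (gen c v + K • v) := by
    simp [genCLM, genL, smul_add, mul_smul]
  rw [hv']
  exact smul_nonneg ht (gen_add_smul_nonneg hc hK hv)

lemma heatSG_mono (hc : ∀ x σ, 0 ≤ c x σ) {t : ℝ} (ht : 0 ≤ t) {G H : (V → Bool) → ℝ}
    (hGH : G ≤ H) : heatSG c t G ≤ heatSG c t H := by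
  have := heatSG_nonneg hc ht (sub_nonneg.2 hGH)
  rwa [map_sub, sub_nonneg] at this

lemma heatSG_const (t r : ℝ) : heatSG c t (fun _ => r) = fun _ => r :=
  exp_apply_of_apply_eq_zero _ (by ext σ; simp [genCLM, genL, gen])

lemma heatSG_add_const (t r : ℝ) (F : (V → Bool) → ℝ) :
    heatSG c t (fun σ => F σ + r) = fun σ => heatSG c t F σ + r := by
  change heatSG c t (F + fun _ => r) = heatSG c t F + fun _ => r
  rw [map_add, heatSG_const]

lemma heatSG_zero (F : (V → Bool) → ℝ) : heatSG c 0 F = F := by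
  simp [heatSG]

lemma hasDerivAt_heatSG_apply (F : (V → Bool) → ℝ) (σ : V → Bool) (t : ℝ) :
    HasDerivAt (fun s => heatSG c s F σ) (gen c (heatSG c t F) σ) t := by
  let evalAt : (((V → Bool) → ℝ) →L[ℝ] ((V → Bool) → ℝ)) →L[ℝ] ℝ :=
    (ContinuousLinearMap.proj σ).comp (ContinuousLinearMap.apply ℝ ((V → Bool) → ℝ) F)
  exact evalAt.hasFDerivAt.comp_hasDerivAt t (hasDerivAt_exp_smul_const' (genCLM c) t)

lemma hasDerivAt_Emean {f : ℝ → (V → Bool) → ℝ} {f' : (V → Bool) → ℝ} {t : ℝ}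
    (hf : ∀ σ, HasDerivAt (fun s => f s σ) (f' σ) t) :
    HasDerivAt (fun s => Emean μ (f s)) (Emean μ f') t :=
  HasDerivAt.fun_sum fun σ _ => (hf σ).const_mul (μ σ)

lemma Emean_heatSG (hrev : ∀ x σ, c x σ * μ σ = c x (flipC σ x) * μ (flipC σ x))
    (t : ℝ) (F : (V → Bool) → ℝ) : Emean μ (heatSG c t F) = Emean μ F := by
  have hderiv : ∀ s, HasDerivAt (fun s => Emean μ (heatSG c s F)) 0 s := fun s => by
    simpa only [Emean_gen hrev] using
      hasDerivAt_Emean (μ := μ) (hasDerivAt_heatSG_apply (c := c) F · s)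
  rw [is_const_of_deriv_eq_zero (fun s => (hderiv s).differentiableAt)
    (fun s => (hderiv s).deriv) t 0, heatSG_zero]

lemma hasDerivAt_entropy_heatSG (hrev : ∀ x σ, c x σ * μ σ = c x (flipC σ x) * μ (flipC σ x))
    {F : (V → Bool) → ℝ} {t : ℝ} (hpos : ∀ σ, 0 < heatSG c t F σ) :
    HasDerivAt (fun s => entropy μ (heatSG c s F))
      (Emean μ (fun σ => log (heatSG c t F σ) * gen c (heatSG c t F) σ)) t := by
  simp only [entropy, Emean_heatSG hrev]
  have h := hasDerivAt_Emean (μ := μ) (f := fun s σ => heatSG c s F σ * log (heatSG c s F σ))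
    fun σ => (hasDerivAt_mul_log (hpos σ).ne').comp (h₂ := fun x => x * log x) t
      (hasDerivAt_heatSG_apply F σ t)
  refine (h.sub_const _).congr_deriv ?_
  calc Emean μ (fun σ => (log (heatSG c t F σ) + 1) * gen c (heatSG c t F) σ)
      = Emean μ (fun σ => log (heatSG c t F σ) * gen c (heatSG c t F) σ) +
          Emean μ (gen c (heatSG c t F)) := by
        simp only [Emean, ← sum_add_distrib]
        exact sum_congr rfl fun σ _ => by ring
    _ = _ := by rw [Emean_gen hrev, add_zero]

theorem entropy_heatSG_le_of_forall_le (hμ : ∀ σ, 0 ≤ μ σ) (hc : ∀ x σ, 0 ≤ c x σ)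
    (hrev : ∀ x σ, c x σ * μ σ = c x (flipC σ x) * μ (flipC σ x)) {γ : ℝ} (hγ : 0 < γ)
    (hLSI : ∀ F : (V → Bool) → ℝ, (∀ σ, 0 ≤ F σ) →
      entropy μ F ≤ (2 / γ) * dirichlet μ c (fun σ => √(F σ)))
    {F : (V → Bool) → ℝ} {m : ℝ} (hm : 0 < m) (hFm : ∀ σ, m ≤ F σ) {t : ℝ} (ht : 0 ≤ t) :
    entropy μ (heatSG c t F) ≤ exp (-γ * t) * entropy μ F := by
  have hpos : ∀ s ∈ Set.Ici (0 : ℝ), ∀ σ, 0 < heatSG c s F σ := fun s hs σ =>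
    hm.trans_le (by simpa [heatSG_const] using heatSG_mono hc hs (show (fun _ => m) ≤ F from hFm) σ)
  set φ := fun s => entropy μ (heatSG c s F)
  set φ' := fun s => Emean μ (fun σ => log (heatSG c s F σ) * gen c (heatSG c s F) σ)
  have hderiv : ∀ s ∈ Set.Ici 0, HasDerivAt φ (φ' s) s := fun s hs =>
    hasDerivAt_entropy_heatSG hrev (hpos s hs)
  have hdecay : ∀ s ∈ Set.Ici 0, φ' s ≤ -γ * φ s := fun s hs => by
    have hdir := Emean_log_mul_gen_le hμ hc hrev (hpos s hs)
    have hlsi := hLSI _ fun σ => (hpos s hs σ).le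
    rw [div_mul_eq_mul_div, le_div_iff₀ hγ] at hlsi
    linarith
  have := le_gronwallBound_of_liminf_deriv_right_le (f := φ) (f' := φ') (δ := φ 0) (K := -γ)
    (ε := 0) (fun s hs => (hderiv s hs.1).continuousAt.continuousWithinAt)
    (fun s hs r hr => (hderiv s hs.1).hasDerivWithinAt.liminf_right_slope_le hr) le_rfl
    (fun s hs => by simpa using hdecay s hs.1) t ⟨ht, le_rfl⟩
  simpa [φ, gronwallBound_ε0, heatSG_zero, mul_comm] using this

lemma continuous_entropy_add_const (G : (V → Bool) → ℝ) :
    Continuous fun ε : ℝ => entropy μ (fun σ => G σ + ε) := by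
  have hshift : ∀ σ, Continuous fun ε : ℝ => G σ + ε := fun σ =>
    continuous_const.add continuous_id
  exact (continuous_finsetSum _ fun σ _ =>
      continuous_const.mul (continuous_mul_log.comp (hshift σ))).sub
    (continuous_mul_log.comp (continuous_finsetSum _ fun σ _ => continuous_const.mul (hshift σ)))

end

theorem entropy_exponential_decay_general
    {V : Type*} [Fintype V] [DecidableEq V]
    (μ : (V → Bool) → ℝ) (hμpos : ∀ σ, 0 < μ σ)
    (c : V → (V → Bool) → ℝ) (hcpos : ∀ x σ, 0 < c x σ)
    (hrev : ∀ x σ, c x σ * μ σ = c x (flipC σ x) * μ (flipC σ x))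
    (γ : ℝ) (hγ : 0 < γ)
    (hLSI : ∀ F : (V → Bool) → ℝ, (∀ σ, 0 ≤ F σ) →
      entropy μ F ≤ (2 / γ) * dirichlet μ c (fun σ => Real.sqrt (F σ)))
    (F : (V → Bool) → ℝ) (hF : ∀ σ, 0 ≤ F σ) (t : ℝ) (ht : 0 ≤ t) :
    entropy μ (heatSG c t F) ≤ Real.exp (-γ * t) * entropy μ F := by
  have hreg : ∀ ε ∈ Set.Ioi (0 : ℝ), entropy μ (fun σ => heatSG c t F σ + ε) ≤
      exp (-γ * t) * entropy μ (fun σ => F σ + ε) := fun ε hε => by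
    rw [← heatSG_add_const]
    exact entropy_heatSG_le_of_forall_le (fun σ => (hμpos σ).le) (fun x σ => (hcpos x σ).le) hrev
      hγ hLSI hε (fun σ => le_add_of_nonneg_left (hF σ)) ht
  simpa using ContinuousWithinAt.closure_le (by simp : (0 : ℝ) ∈ closure (Set.Ioi 0))
    (continuous_entropy_add_const _).continuousWithinAt
    ((continuous_entropy_add_const _).const_mul _).continuousWithinAt hreg

/-- **Exponential entropy decay** along the Glauber semigroup under a log-Sobolev
inequality with constant `γ`: `Ent_μ(P_t F) ≤ e^{−γt} Ent_μ(F)` for nonnegative `F`. -/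
theorem entropy_exponential_decay
    {V : Type*} [Fintype V] [DecidableEq V]
    (μ : (V → Bool) → ℝ) (hμpos : ∀ σ, 0 < μ σ) (hμ1 : ∑ σ, μ σ = 1)
    (c : V → (V → Bool) → ℝ) (hcpos : ∀ x σ, 0 < c x σ)
    (hrev : ∀ x σ, c x σ * μ σ = c x (flipC σ x) * μ (flipC σ x))
    (γ : ℝ) (hγ : 0 < γ)
    (hLSI : ∀ F : (V → Bool) → ℝ, (∀ σ, 0 ≤ F σ) →
      entropy μ F ≤ (2 / γ) * dirichlet μ c (fun σ => Real.sqrt (F σ)))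
    (F : (V → Bool) → ℝ) (hF : ∀ σ, 0 ≤ F σ) (t : ℝ) (ht : 0 ≤ t) :
    entropy μ (heatSG c t F) ≤ Real.exp (-γ * t) * entropy μ F :=
  entropy_exponential_decay_general μ hμpos c hcpos hrev γ hγ hLSI F hF t ht
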